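/- arXiv:2409.13352 — 2 statements merged into one kernel-verified Lean document; each statement's English description precedes it below -/
import Mathlib

section
/- Let n ≥ 1, r ≥ 1 and let q = x_0^2 + x_1^2 + ⋯ + x_{n-2}^2 + x_{n-1}·x_n ∈ ℂ[x_0,…,x_n]. For every d with 1 ≤ d ≤ r and every homogeneous polynomial g ∈ ℂ[y_0,…,y_n] of degree d, if g(∂)(q^r) = 0 then g = 0. Equivalently, the apolar ideal (q^r)^⊥ contains no nonzero form of degree at most r, and the family (∂^α(q^r)) indexed by multi-indices α with |α| = d is linearly independent over ℂ for every d ≤ r. -/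
/-!
The operators `g(∂)` commute with every `∂_i` and obey the Leibniz rule
`g(∂)(x_j f) = x_j g(∂)f + (∂_j g)(∂)f`. Since `q` is a nondegenerate quadric, every `x_j` is a
combination of the `∂_i q`, so every `x_j q^k` is a combination of the `∂_i q^(k+1)`. Hence
`g(∂)q^(k+1) = 0` forces `g(∂)(x_j q^k) = 0` for all `j`; as `∑_j ∂_j (x_j q^k) = (n + 1 + 2k) q^k`,
also `g(∂)q^k = 0`, and the Leibniz rule then gives `(∂_j g)(∂)q^k = 0`. Induction on `deg g`
shows all `∂_j g` vanish, so `g = 0` by Euler's identity. Linear independence of the `∂^α q^r`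
is the same statement for `g = ∑ c_α y^α`.
-/

open MvPolynomial

/-- Iterated partial derivative `∂^α f`: `MvPolynomial.pderiv i` is applied `α i` times
for each variable `i`. -/
noncomputable def pdPow {n : ℕ} (α : Fin n →₀ ℕ) (f : MvPolynomial (Fin n) ℂ) :
    MvPolynomial (Fin n) ℂ :=
  (List.finRange n).foldr (fun i g => (fun h => MvPolynomial.pderiv i h)^[α i] g) f

/-- `g(∂)f`: the polynomial differential operator associated to `g` applied to `f`. -/
noncomputable def apolarAct {n : ℕ} (g f : MvPolynomial (Fin n) ℂ) :
    MvPolynomial (Fin n) ℂ :=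
  (AddMonoidAlgebra.coeff g).sum fun α c => c • pdPow α f

/-- The quadric `q = x_0^2 + ⋯ + x_{n-2}^2 + x_{n-1}·x_n` in `ℂ[x_0,…,x_n]`. -/
noncomputable def qForm (n : ℕ) : MvPolynomial (Fin (n + 1)) ℂ :=
  (∑ i ∈ Finset.univ.filter (fun i : Fin (n + 1) => (i : ℕ) + 2 ≤ n), X i ^ 2)
    + X (⟨n - 1, by omega⟩ : Fin (n + 1)) * X (⟨n, by omega⟩ : Fin (n + 1))

section PartialDerivatives

variable {σ R : Type*} [CommSemiring R]

theorem pderiv_comm (i j : σ) (f : MvPolynomial σ R) :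
    pderiv i (pderiv j f) = pderiv j (pderiv i f) := by
  classical
  induction f using MvPolynomial.induction_on with
  | C a => simp
  | add p q hp hq => simp [hp, hq]
  | mul_X p k h =>
    have hX (a b : σ) : pderiv a (pderiv b (X k : MvPolynomial σ R)) = 0 := by
      rw [pderiv_X]; rcases eq_or_ne b k with rfl | hbk <;> simp [*]
    simp only [pderiv_mul, map_add, h, hX]
    ring

theorem commute_pderiv (i j : σ) :
    Commute (pderiv i : Derivation R (MvPolynomial σ R) _).toLinearMap (pderiv j).toLinearMap :=
  LinearMap.ext (pderiv_comm i j)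

end PartialDerivatives

variable {N : ℕ}

noncomputable def pdPowOp (α : Fin N →₀ ℕ) : Module.End ℂ (MvPolynomial (Fin N) ℂ) :=
  ((List.finRange N).map fun i => (pderiv i).toLinearMap ^ α i).prod

theorem pdPow_eq_pdPowOp (α : Fin N →₀ ℕ) (f : MvPolynomial (Fin N) ℂ) :
    pdPow α f = pdPowOp α f := by
  suffices ∀ l : List (Fin N), l.foldr (fun i g => (fun h => pderiv i h)^[α i] g) f
      = (l.map fun i => (pderiv i).toLinearMap ^ α i).prod f from this _
  intro l
  induction l with
  | nil => rfl
  | cons i l ih => simp [ih, Module.End.pow_apply]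

theorem pdPowOp_zero : pdPowOp (0 : Fin N →₀ ℕ) = 1 := by
  simp [pdPowOp]

theorem commute_pderiv_pdPowOp (j : Fin N) (α : Fin N →₀ ℕ) :
    Commute (pderiv j).toLinearMap (pdPowOp α) :=
  Commute.list_prod_right _ _ fun _ hb => by
    obtain ⟨i, -, rfl⟩ := List.mem_map.mp hb
    exact (commute_pderiv j i).pow_right _

theorem pdPowOp_add_single (α : Fin N →₀ ℕ) (i : Fin N) :
    pdPowOp (α + Finsupp.single i 1) = pdPowOp α * (pderiv i).toLinearMap := by
  suffices ∀ l : List (Fin N), l.Nodup → i ∈ l →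
      (l.map fun k => (pderiv k).toLinearMap ^ (α + Finsupp.single i 1 : Fin N →₀ ℕ) k).prod
        = (l.map fun k => (pderiv k).toLinearMap ^ α k).prod * (pderiv i).toLinearMap from
    this _ (List.nodup_finRange N) (List.mem_finRange i)
  intro l hl hi
  induction l with
  | nil => simp at hi
  | cons k l ih =>
    obtain ⟨hkl, hl⟩ := List.nodup_cons.mp hl
    rcases eq_or_ne k i with rfl | hki
    · have hrest : l.map (fun j => (pderiv (R := ℂ) j).toLinearMap ^
            (α + Finsupp.single k 1 : Fin N →₀ ℕ) j)
          = l.map fun j => (pderiv j).toLinearMap ^ α j :=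
        List.map_congr_left fun j hj => by
          rw [Finsupp.add_apply, Finsupp.single_eq_of_ne (ne_of_mem_of_not_mem hj hkl),
            add_zero]
      rw [List.map_cons, List.map_cons, List.prod_cons, List.prod_cons, hrest,
        Finsupp.add_apply, Finsupp.single_eq_same, pow_succ, mul_assoc, mul_assoc,
        (Commute.list_prod_right _ _ fun _ hb => ?_).eq]
      obtain ⟨j, -, rfl⟩ := List.mem_map.mp hb
      exact (commute_pderiv k j).pow_right _
    · rw [List.map_cons, List.map_cons, List.prod_cons, List.prod_cons,
        ih hl ((List.mem_cons.mp hi).resolve_left hki.symm), Finsupp.add_apply,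
        Finsupp.single_eq_of_ne hki, add_zero, mul_assoc]

noncomputable def apolarOp :
    MvPolynomial (Fin N) ℂ →ₗ[ℂ] Module.End ℂ (MvPolynomial (Fin N) ℂ) :=
  Finsupp.linearCombination ℂ pdPowOp ∘ₗ (AddMonoidAlgebra.coeffLinearEquiv ℂ).toLinearMap

theorem apolarAct_eq_apolarOp (g f : MvPolynomial (Fin N) ℂ) :
    apolarAct g f = apolarOp g f := by
  simp [apolarAct, apolarOp, Finsupp.linearCombination_apply, pdPow_eq_pdPowOp]

theorem apolarOp_monomial (α : Fin N →₀ ℕ) (c : ℂ) :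
    apolarOp (monomial α c) = c • pdPowOp α :=
  Finsupp.linearCombination_single ℂ c α

theorem apolarOp_C (c : ℂ) : apolarOp (C c : MvPolynomial (Fin N) ℂ) = c • 1 := by
  rw [C_apply, apolarOp_monomial, pdPowOp_zero]

theorem apolarOp_mul_X (g : MvPolynomial (Fin N) ℂ) (i : Fin N) :
    apolarOp (g * X i) = apolarOp g * (pderiv i).toLinearMap := by
  induction g using MvPolynomial.induction_on' with
  | monomial α c =>
    rw [X, monomial_mul, mul_one, apolarOp_monomial, apolarOp_monomial, pdPowOp_add_single,
      smul_mul_assoc]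
  | add p q hp hq => rw [add_mul, map_add, map_add, hp, hq, add_mul]

theorem commute_pderiv_apolarOp (j : Fin N) (g : MvPolynomial (Fin N) ℂ) :
    Commute (pderiv j).toLinearMap (apolarOp g) := by
  induction g using MvPolynomial.induction_on' with
  | monomial α c => rw [apolarOp_monomial]; exact (commute_pderiv_pdPowOp j α).smul_right c
  | add p q hp hq => rw [map_add]; exact hp.add_right hq

theorem apolarOp_X_mul (g : MvPolynomial (Fin N) ℂ) (j : Fin N) (f : MvPolynomial (Fin N) ℂ) :
    apolarOp g (X j * f) = X j * apolarOp g f + apolarOp (pderiv j g) f := by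
  induction g using MvPolynomial.induction_on generalizing f with
  | C c => simp [apolarOp_C]
  | add p q hp hq => simp only [map_add, LinearMap.add_apply, hp, hq]; ring
  | mul_X p i h =>
    have hX : apolarOp p (pderiv i (X j) * f) = apolarOp (p * pderiv j (X i)) f := by
      rcases eq_or_ne i j with rfl | hij
      · simp
      · simp [pderiv_X_of_ne hij, pderiv_X_of_ne hij.symm]
    simp only [apolarOp_mul_X, Module.End.mul_apply, Derivation.coeFn_coe, pderiv_mul,
      map_add, LinearMap.add_apply, h, hX]
    ring

theorem MvPolynomial.IsHomogeneous.sum_pderiv_X_mul {σ R : Type*} [Fintype σ] [CommSemiring R]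
    {φ : MvPolynomial σ R} {d : ℕ} (h : φ.IsHomogeneous d) :
    ∑ j, pderiv j (X j * φ) = (Fintype.card σ + d) • φ := by
  simp only [pderiv_mul, pderiv_X_self, one_mul, Finset.sum_add_distrib, Finset.sum_const,
    h.sum_X_mul_pderiv, Finset.card_univ, add_smul]

theorem X_mul_pow_mem_span_pderiv_pow {σ K : Type*} [Field K] [CharZero K]
    {q : MvPolynomial σ K} {j : σ} (hX : X j ∈ Submodule.span K (Set.range fun i => pderiv i q))
    (k : ℕ) : X j * q ^ k ∈ Submodule.span K (Set.range fun i => pderiv i (q ^ (k + 1))) := by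
  refine (Submodule.span_le.mpr (Set.range_subset_iff.mpr fun i => ?_) :
    _ ≤ (Submodule.span K _).comap (LinearMap.mulRight K (q ^ k))) hX
  have hpow : pderiv i q * q ^ k = ((k + 1 : K)⁻¹) • pderiv i (q ^ (k + 1)) := by
    rw [pderiv_pow, Nat.add_sub_cancel, smul_eq_C_mul, Nat.cast_succ, ← mul_assoc, ← mul_assoc,
      ← map_natCast C, ← map_one C, ← map_add, ← map_mul C,
      inv_mul_cancel₀ (Nat.cast_add_one_ne_zero k),
      map_one, one_mul, mul_comm]
  rw [SetLike.mem_coe, Submodule.mem_comap, LinearMap.mulRight_apply, hpow]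
  exact Submodule.smul_mem _ _ (Submodule.subset_span ⟨i, rfl⟩)

theorem apolarOp_pderiv (g : MvPolynomial (Fin N) ℂ) (i : Fin N) (f : MvPolynomial (Fin N) ℂ) :
    apolarOp g (pderiv i f) = pderiv i (apolarOp g f) :=
  (LinearMap.congr_fun (commute_pderiv_apolarOp i g).eq f).symm

section HomogeneousPowers

variable {q : MvPolynomial (Fin N) ℂ} {m : ℕ}

theorem apolarOp_pderiv_pow_eq_zero (hq : q.IsHomogeneous m)
    (hX : ∀ j, X j ∈ Submodule.span ℂ (Set.range fun i => pderiv i q))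
    {g : MvPolynomial (Fin N) ℂ} {k : ℕ} (h : apolarOp g (q ^ (k + 1)) = 0) (j : Fin N) :
    apolarOp (pderiv j g) (q ^ k) = 0 := by
  have hker : Submodule.span ℂ (Set.range fun i => pderiv i (q ^ (k + 1)))
      ≤ LinearMap.ker (apolarOp g) :=
    Submodule.span_le.mpr (Set.range_subset_iff.mpr fun i => by
      rw [SetLike.mem_coe, LinearMap.mem_ker, apolarOp_pderiv, h, map_zero])
  have hXq (i : Fin N) : apolarOp g (X i * q ^ k) = 0 :=
    hker (X_mul_pow_mem_span_pderiv_pow (hX i) k)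
  have hqk : apolarOp g (q ^ k) = 0 := by
    have : (N + m * k) • apolarOp g (q ^ k) = 0 := by
      have euler := (hq.pow k).sum_pderiv_X_mul
      rw [Fintype.card_fin] at euler
      rw [← map_nsmul, ← euler, map_sum]
      exact Finset.sum_eq_zero fun i _ => by rw [apolarOp_pderiv, hXq, map_zero]
    exact (smul_eq_zero.mp this).resolve_left (by have := j.pos; omega)
  simpa [apolarOp_X_mul, hqk] using hXq j

theorem eq_zero_of_apolarAct_pow_eq_zero (hq : q.IsHomogeneous m)
    (hX : ∀ j, X j ∈ Submodule.span ℂ (Set.range fun i => pderiv i q)) (hq0 : q ≠ 0)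
    {d r : ℕ} (hdr : d ≤ r) {g : MvPolynomial (Fin N) ℂ} (hg : g.IsHomogeneous d)
    (h : apolarAct g (q ^ r) = 0) : g = 0 := by
  rw [apolarAct_eq_apolarOp] at h
  induction d generalizing r g with
  | zero =>
    obtain ⟨c, rfl⟩ : ∃ c, g = C c :=
      ⟨_, totalDegree_eq_zero_iff_eq_C.mp ((totalDegree_zero_iff_isHomogeneous _).mpr hg)⟩
    rw [apolarOp_C, LinearMap.smul_apply, Module.End.one_apply] at h
    simp [(smul_eq_zero.mp h).resolve_right (pow_ne_zero r hq0)]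
  | succ d ih =>
    obtain ⟨r, rfl⟩ : ∃ r', r = r' + 1 := ⟨r - 1, by omega⟩
    have hpd (j : Fin N) : pderiv j g = 0 :=
      ih (by omega) hg.pderiv (apolarOp_pderiv_pow_eq_zero hq hX h j)
    have euler := hg.sum_X_mul_pderiv
    simp only [hpd, mul_zero, Finset.sum_const_zero] at euler
    exact (smul_eq_zero.mp euler.symm).resolve_left (Nat.succ_ne_zero d)

theorem linearIndependent_pdPow_pow (hq : q.IsHomogeneous m)
    (hX : ∀ j, X j ∈ Submodule.span ℂ (Set.range fun i => pderiv i q)) (hq0 : q ≠ 0)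
    {d r : ℕ} (hdr : d ≤ r) :
    LinearIndependent ℂ
      (fun α : {α : Fin N →₀ ℕ // (∑ i, α i) = d} => pdPow α.1 (q ^ r)) := by
  have hmon : LinearIndependent ℂ
      (fun α : {α : Fin N →₀ ℕ // (∑ i, α i) = d} =>
        (monomial α.1 1 : MvPolynomial (Fin N) ℂ)) := by
    rw [← Function.comp_def (fun α => (monomial α 1 : MvPolynomial (Fin N) ℂ)),
      ← coe_basisMonomials]
    exact (basisMonomials (Fin N) ℂ).linearIndependent.comp _ Subtype.val_injective
  have hspan : Submodule.span ℂ (Set.range fun α : {α : Fin N →₀ ℕ // (∑ i, α i) = d} =>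
      (monomial α.1 1 : MvPolynomial (Fin N) ℂ)) ≤ homogeneousSubmodule (Fin N) ℂ d :=
    Submodule.span_le.mpr (Set.range_subset_iff.mpr fun α =>
      isHomogeneous_monomial _ (by rw [Finsupp.degree_eq_sum]; exact α.2))
  have hfamily : (fun α : {α : Fin N →₀ ℕ // (∑ i, α i) = d} => pdPow α.1 (q ^ r))
      = apolarOp.flip (q ^ r) ∘ fun α => monomial α.1 1 := by
    ext1 α
    simp [apolarOp_monomial, pdPow_eq_pdPowOp]
  rw [hfamily]
  exact hmon.map (Submodule.disjoint_def.mpr fun g hg hker =>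
    eq_zero_of_apolarAct_pow_eq_zero hq hX hq0 hdr (hspan hg)
      (by simpa [apolarAct_eq_apolarOp] using hker))

end HomogeneousPowers

theorem qForm_isHomogeneous (n : ℕ) : (qForm n).IsHomogeneous 2 :=
  (IsHomogeneous.sum _ _ _ fun i _ => isHomogeneous_X_pow i 2).add
    ((isHomogeneous_X ℂ _).mul (isHomogeneous_X ℂ _))

theorem X_mem_span_pderiv_qForm (n : ℕ) (j : Fin (n + 1)) :
    X j ∈ Submodule.span ℂ (Set.range fun i => pderiv i (qForm n)) := by
  classical
  have mem {i : Fin (n + 1)} {c : ℂ} (hc : c ≠ 0) (h : pderiv i (qForm n) = c • X j) :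
      X j ∈ Submodule.span ℂ (Set.range fun i => pderiv i (qForm n)) := by
    rw [← inv_smul_smul₀ hc (X j), ← h]
    exact Submodule.smul_mem _ _ (Submodule.subset_span ⟨i, rfl⟩)
  obtain ⟨j, hj⟩ := j
  -- `x_j = ∂_j q / 2` for `j + 2 ≤ n`, `x_{n-1} = ∂_n q`, `x_n = ∂_{n-1} q`; `q = x_0^2` if `n = 0`
  rcases (by omega : j + 2 ≤ n ∨ (n = 0 ∧ j = 0) ∨ (1 ≤ n ∧ j = n - 1) ∨ (1 ≤ n ∧ j = n))
    with hj2 | ⟨rfl, rfl⟩ | ⟨hn, rfl⟩ | ⟨hn, hjn⟩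
  · refine mem (i := ⟨j, hj⟩) two_ne_zero ?_
    have hu : (⟨n - 1, by omega⟩ : Fin (n + 1)) ≠ ⟨j, hj⟩ := Fin.ne_of_val_ne (by simp; omega)
    have hv : (⟨n, by omega⟩ : Fin (n + 1)) ≠ ⟨j, hj⟩ := Fin.ne_of_val_ne (by simp; omega)
    simp [qForm, pderiv_X, Pi.single_apply, hu, hv, hj2, two_smul]
  · exact mem (i := 0) two_ne_zero (by simp [qForm, two_smul])
  · refine mem (i := ⟨n, by omega⟩) one_ne_zero ?_
    simp [qForm, pderiv_X, Pi.single_apply, Fin.ext_iff, show n - 1 ≠ n by omega]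
    exact Finset.sum_eq_zero fun x hx => if_neg (by simp at hx; omega)
  · subst j
    refine mem (i := ⟨n - 1, by omega⟩) one_ne_zero ?_
    simp [qForm, pderiv_X, Pi.single_apply, Fin.ext_iff, show n ≠ n - 1 by omega]
    exact Finset.sum_eq_zero fun x hx => if_neg (by simp at hx; omega)

theorem qForm_ne_zero (n : ℕ) : qForm n ≠ 0 := fun h =>
  X_ne_zero (R := ℂ) (0 : Fin (n + 1)) (by simpa [h] using X_mem_span_pderiv_qForm n 0)

theorem statement1_general (n r : ℕ) :
    (∀ d : ℕ, 1 ≤ d → d ≤ r →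
      ∀ g : MvPolynomial (Fin (n + 1)) ℂ, g.IsHomogeneous d →
        apolarAct g (qForm n ^ r) = 0 → g = 0) ∧
    (∀ d : ℕ, d ≤ r →
      LinearIndependent ℂ
        (fun α : {α : Fin (n + 1) →₀ ℕ // (∑ i, α i) = d} =>
          pdPow α.1 (qForm n ^ r))) :=
  ⟨fun _ _ hdr _ hg h => eq_zero_of_apolarAct_pow_eq_zero (qForm_isHomogeneous n)
      (X_mem_span_pderiv_qForm n) (qForm_ne_zero n) hdr hg h,
    fun _ hdr => linearIndependent_pdPow_pow (qForm_isHomogeneous n)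
      (X_mem_span_pderiv_qForm n) (qForm_ne_zero n) hdr⟩

/-- The apolar ideal `(q^r)^⊥` contains no nonzero form of degree `1 ≤ d ≤ r`, and the
iterated partials `∂^α(q^r)` with `|α| = d` are linearly independent for every `d ≤ r`. -/
theorem statement1 (n r : ℕ) (hn : 1 ≤ n) (hr : 1 ≤ r) :
    (∀ d : ℕ, 1 ≤ d → d ≤ r →
      ∀ g : MvPolynomial (Fin (n + 1)) ℂ, g.IsHomogeneous d →
        apolarAct g (qForm n ^ r) = 0 → g = 0) ∧
    (∀ d : ℕ, d ≤ r →
      LinearIndependent ℂ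
        (fun α : {α : Fin (n + 1) →₀ ℕ // (∑ i, α i) = d} =>
          pdPow α.1 (qForm n ^ r))) :=
  statement1_general n r
end

section
/- Let n ≥ 1, r ≥ 1 and let q = x_0^2 + ⋯ + x_{n-2}^2 + x_{n-1}·x_n ∈ ℂ[x_0,…,x_n]. Then the differential operator (1/4)(∂_0^2 + ⋯ + ∂_{n-2}^2) + ∂_{n-1}∂_n, i.e. q^{-1}(∂) for the inverse quadric q^{-1} = (1/4)(y_0^2 + ⋯ + y_{n-2}^2) + y_{n-1}y_n, satisfies q^{-1}(∂)(q^r) = ( r(r−1) + r(n+1)/2 ) · q^{r−1}. -/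
/-!
By the chain rule, `∂ᵢ∂ⱼ(qʳ) = r(r-1) qʳ⁻² ∂ᵢq ∂ⱼq + r qʳ⁻¹ ∂ᵢ∂ⱼq`. Contracting with the
coefficients of `q⁻¹`, the first-order terms recombine into `q` itself (since `∂ᵢq = 2xᵢ`,
`∂_{n-1}q = xₙ`, `∂ₙq = x_{n-1}`), and the second-order terms give the trace
`(n-1)·(1/4)·2 + 1 = (n+1)/2`.
-/

open MvPolynomial

/-- The inverse quadric `q^{-1} = (1/4)(y_0^2 + ⋯ + y_{n-2}^2) + y_{n-1}·y_n`. -/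
noncomputable def qInv (n : ℕ) : MvPolynomial (Fin (n + 1)) ℂ :=
  C (1 / 4 : ℂ) *
      (∑ i ∈ Finset.univ.filter (fun i : Fin (n + 1) => (i : ℕ) + 2 ≤ n), X i ^ 2)
    + X (⟨n - 1, by omega⟩ : Fin (n + 1)) * X (⟨n, by omega⟩ : Fin (n + 1))

namespace MvPolynomial

variable {σ R : Type*}

theorem commute_pderiv [CommSemiring R] (i j : σ) :
    Function.Commute (fun p : MvPolynomial σ R => pderiv i p) (fun p => pderiv j p) := by
  classical
  intro p
  induction p using MvPolynomial.induction_on with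
  | C a => simp
  | add p q hp hq => simp_all
  | mul_X p k hp =>
    simp only [pderiv_mul, map_add, hp, pderiv_X, Pi.single_apply]
    split_ifs <;> simp [add_right_comm]

theorem commute_pderiv_foldr_iterate [CommSemiring R] (j : σ) (l : List σ) (α : σ →₀ ℕ) :
    Function.Commute (fun p : MvPolynomial σ R => pderiv j p)
      (fun f => l.foldr (fun i g => (fun h => pderiv i h)^[α i] g) f) := by
  induction l with
  | nil => exact fun _ => rfl
  | cons a t ih =>
    exact fun f => ((commute_pderiv j a).iterate_right (α a) _).trans (congrArg _ (ih f))

theorem foldr_iterate_pderiv_add [CommSemiring R] (l : List σ) (α β : σ →₀ ℕ)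
    (f : MvPolynomial σ R) :
    l.foldr (fun i g => (fun h => pderiv i h)^[(α + β) i] g) f
      = l.foldr (fun i g => (fun h => pderiv i h)^[α i] g)
          (l.foldr (fun i g => (fun h => pderiv i h)^[β i] g) f) := by
  induction l with
  | nil => rfl
  | cons a t ih =>
    simp only [List.foldr_cons]
    rw [ih, Finsupp.add_apply, Function.iterate_add_apply]
    exact congrArg _ ((commute_pderiv_foldr_iterate a t α).iterate_left (β a) _)

theorem foldr_iterate_pderiv_single [CommSemiring R] [DecidableEq σ] (l : List σ) (i : σ)
    (k : ℕ) (f : MvPolynomial σ R) :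
    l.foldr (fun j g => (fun h => pderiv j h)^[Finsupp.single i k j] g) f
      = (fun h => pderiv i h)^[k * l.count i] f := by
  induction l with
  | nil => rfl
  | cons a t ih =>
    rw [List.foldr_cons, ih, List.count_cons]
    by_cases h : a = i
    · subst h
      rw [Finsupp.single_eq_same, ← Function.iterate_add_apply]
      simp [mul_add, add_comm]
    · simp [h]

theorem pderiv_pderiv_pow [CommRing R] (i j : σ) (p : MvPolynomial σ R) (r : ℕ) :
    pderiv i (pderiv j (p ^ r)) =
      ((r : R) * (r - 1)) • (p ^ (r - 2) * pderiv i p * pderiv j p)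
        + (r : R) • (p ^ (r - 1) * pderiv i (pderiv j p)) := by
  rcases r with _ | r
  · simp
  · have hc : pderiv i ((r + 1 : ℕ) : MvPolynomial σ R) = 0 := by
      rw [← map_natCast C]; exact pderiv_C
    rw [pderiv_pow, pderiv_mul, pderiv_mul, hc, pderiv_pow, Nat.add_sub_cancel,
      show r + 1 - 2 = r - 1 by omega]
    simp only [smul_eq_C_mul, map_mul, map_sub, map_natCast, map_one]
    push_cast
    ring

end MvPolynomial

section Apolar

variable {m : ℕ}

theorem pdPow_add (α β : Fin m →₀ ℕ) (f : MvPolynomial (Fin m) ℂ) :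
    pdPow (α + β) f = pdPow α (pdPow β f) :=
  foldr_iterate_pderiv_add _ α β f

theorem pdPow_single (i : Fin m) (k : ℕ) (f : MvPolynomial (Fin m) ℂ) :
    pdPow (Finsupp.single i k) f = (fun h => pderiv i h)^[k] f := by
  rw [pdPow, foldr_iterate_pderiv_single,
    List.count_eq_one_of_mem (List.nodup_finRange m) (List.mem_finRange i), mul_one]

noncomputable def apolarActLinear (f : MvPolynomial (Fin m) ℂ) :
    MvPolynomial (Fin m) ℂ →ₗ[ℂ] MvPolynomial (Fin m) ℂ :=
  Finsupp.linearCombination ℂ (fun α => pdPow α f) ∘ₗ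
    (AddMonoidAlgebra.coeffLinearEquiv ℂ).toLinearMap

theorem apolarActLinear_apply (f g : MvPolynomial (Fin m) ℂ) :
    apolarActLinear f g = apolarAct g f := rfl

theorem apolarAct_X_mul_X (i j : Fin m) (f : MvPolynomial (Fin m) ℂ) :
    apolarAct (X i * X j) f = pderiv i (pderiv j f) := by
  rw [← apolarActLinear_apply, X, X, monomial_mul, one_mul]
  change Finsupp.linearCombination ℂ _ (Finsupp.single _ 1) = _
  rw [Finsupp.linearCombination_single, one_smul, pdPow_add, pdPow_single, pdPow_single]
  rfl

end Apolar

def qFormSqIndices (n : ℕ) : Finset (Fin (n + 1)) :=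
  Finset.univ.filter fun i : Fin (n + 1) => (i : ℕ) + 2 ≤ n

theorem card_qFormSqIndices (n : ℕ) : (qFormSqIndices n).card = n - 1 := by
  rw [qFormSqIndices, Finset.filter_congr (q := fun i : Fin (n + 1) => (i : ℕ) < n - 1)
    (fun i _ => by omega), Fin.card_filter_val_lt]
  omega

theorem qForm_eq (n : ℕ) : qForm n = ∑ i ∈ qFormSqIndices n, X i ^ 2
    + X (⟨n - 1, by omega⟩ : Fin (n + 1)) * X (⟨n, by omega⟩ : Fin (n + 1)) := rfl

theorem pderiv_qForm_of_mem {n : ℕ} {i : Fin (n + 1)} (hi : i ∈ qFormSqIndices n) :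
    pderiv i (qForm n) = 2 * X i := by
  have hin := (Finset.mem_filter.mp hi).2
  have ha : (⟨n - 1, by omega⟩ : Fin (n + 1)) ≠ i := by simp [Fin.ext_iff]; omega
  have hb : (⟨n, by omega⟩ : Fin (n + 1)) ≠ i := by simp [Fin.ext_iff]; omega
  simp [qForm_eq, pderiv_X, Pi.single_apply, hi, ha, hb]

theorem pderiv_qForm_pred {n : ℕ} (hn : 1 ≤ n) :
    pderiv ⟨n - 1, by omega⟩ (qForm n) = X (⟨n, by omega⟩ : Fin (n + 1)) := by
  have hab : (⟨n, by omega⟩ : Fin (n + 1)) ≠ ⟨n - 1, by omega⟩ := by simp [Fin.ext_iff]; omega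
  have hS : (⟨n - 1, by omega⟩ : Fin (n + 1)) ∉ qFormSqIndices n := by
    simp [qFormSqIndices]; omega
  simp [qForm_eq, pderiv_X, Pi.single_apply, hab, hS]

theorem pderiv_qForm_last {n : ℕ} (hn : 1 ≤ n) :
    pderiv ⟨n, by omega⟩ (qForm n) = X (⟨n - 1, by omega⟩ : Fin (n + 1)) := by
  have hab : (⟨n - 1, by omega⟩ : Fin (n + 1)) ≠ ⟨n, by omega⟩ := by simp [Fin.ext_iff]; omega
  have hS : (⟨n, by omega⟩ : Fin (n + 1)) ∉ qFormSqIndices n := by simp [qFormSqIndices]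
  simp [qForm_eq, pderiv_X, Pi.single_apply, hab, hS]

theorem apolarAct_qInv (n : ℕ) (f : MvPolynomial (Fin (n + 1)) ℂ) :
    apolarAct (qInv n) f = (1 / 4 : ℂ) • ∑ i ∈ qFormSqIndices n, pderiv i (pderiv i f)
      + pderiv ⟨n - 1, by omega⟩ (pderiv ⟨n, by omega⟩ f) := by
  rw [← apolarActLinear_apply, qInv, C_mul', map_add, map_smul, map_sum]
  simp only [sq, apolarActLinear_apply, apolarAct_X_mul_X]
  rfl

theorem pderiv_pderiv_qForm_pow_of_mem {n : ℕ} {i : Fin (n + 1)} (hi : i ∈ qFormSqIndices n)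
    (r : ℕ) :
    pderiv i (pderiv i (qForm n ^ r)) =
      (4 * ((r : ℂ) * (r - 1))) • (qForm n ^ (r - 2) * X i ^ 2)
        + (2 * r : ℂ) • qForm n ^ (r - 1) := by
  rw [pderiv_pderiv_pow, pderiv_qForm_of_mem hi, ← map_ofNat C 2, pderiv_C_mul, pderiv_X_self]
  simp only [smul_eq_C_mul, map_mul, map_ofNat]
  ring

theorem statement3_general (n r : ℕ) (hn : 1 ≤ n) :
    apolarAct (qInv n) (qForm n ^ r)
      = C ((r : ℂ) * ((r : ℂ) - 1) + (r : ℂ) * ((n : ℂ) + 1) / 2) * qForm n ^ (r - 1) := by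
  rw [apolarAct_qInv, Finset.sum_congr rfl fun i hi => pderiv_pderiv_qForm_pow_of_mem hi r,
    Finset.sum_add_distrib, ← Finset.smul_sum, ← Finset.mul_sum, Finset.sum_const,
    card_qFormSqIndices, pderiv_pderiv_pow, pderiv_qForm_pred hn, pderiv_qForm_last hn,
    pderiv_X_self, mul_one,
    ← smul_eq_C_mul, ← Nat.cast_smul_eq_nsmul ℂ, Nat.cast_pred hn]
  -- for `r ≤ 1` the exponents truncate, but then the factor `r(r-1)` vanishes
  have hpow : ((r : ℂ) * (r - 1)) • (qForm n ^ (r - 2) * qForm n)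
      = ((r : ℂ) * (r - 1)) • qForm n ^ (r - 1) := by
    rcases r with _ | _ | r <;> simp [pow_succ]
  have hq : qForm n ^ (r - 2) * ∑ i ∈ qFormSqIndices n, X i ^ 2
      + qForm n ^ (r - 2) * X ⟨n, by omega⟩ * X ⟨n - 1, by omega⟩
        = qForm n ^ (r - 2) * qForm n := by
    rw [qForm_eq]; ring
  linear_combination (norm := module) ((r : ℂ) * (r - 1)) • hq + hpow

/-- `q^{-1}(∂)(q^r) = (r(r−1) + r(n+1)/2) · q^{r−1}`. -/
theorem statement3 (n r : ℕ) (hn : 1 ≤ n) (hr : 1 ≤ r) :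
    apolarAct (qInv n) (qForm n ^ r)
      = C ((r : ℂ) * ((r : ℂ) - 1) + (r : ℂ) * ((n : ℂ) + 1) / 2) * qForm n ^ (r - 1) :=
  statement3_general n r hn
end
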